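/- There exists a complex polynomial Q of degree 3 with all coefficients nonzero such that |q_2(Q)| = |q_3(Q)| = √(9 + 6√3) and Q has a multiple root. In particular, the polynomial Q(z) = 1 + z + z²/√(9+6√3) − z³/(9+6√3)^{3/2} has these properties. -/

import Mathlib

open Polynomial

/-!
Write `s = √(9 + 6√3)`, so that `Q₀ = 1 + z + z²/s − z³/s³`. Its second quotients are
`q₂ = s` and `q₃ = -s`, and its discriminant is `(s⁴ − 18 s² − 27) / s⁶`,
which vanishes because `s² = 9 + 6√3` is a root of `t² − 18 t − 27`; over `ℂ` a cubic with
zero discriminant has a repeated root.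
-/

/-- The explicit cubic `Q(z) = 1 + z + z²/√(9+6√3) − z³/(9+6√3)^{3/2}`. -/
noncomputable def Q₀ : Polynomial ℂ :=
  C 1 + C 1 * X + C ((Real.sqrt (9 + 6 * Real.sqrt 3) : ℂ)⁻¹) * X ^ 2 +
    C (-(((Real.sqrt (9 + 6 * Real.sqrt 3) : ℂ)) ^ 3)⁻¹) * X ^ 3

theorem Cubic.exists_two_le_rootMultiplicity_of_discr_eq_zero {K : Type*} [Field K]
    [IsAlgClosed K] {P : Cubic K} (ha : P.a ≠ 0) (hd : P.discr = 0) :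
    ∃ z, 2 ≤ P.toPoly.rootMultiplicity z := by
  classical
  have hdup : ¬ (Cubic.map (RingHom.id K) P).roots.Nodup :=
    fun h ↦ (Cubic.discr_ne_zero_iff_roots_nodup ha (IsAlgClosed.splits _)).mpr h hd
  obtain ⟨z, hz⟩ := not_forall.mp (mt Multiset.nodup_iff_count_le_one.mpr hdup)
  refine ⟨z, ?_⟩
  rw [← count_roots]
  simpa [Cubic.map_roots, Nat.succ_le_iff] using hz

def secondQuotient {R : Type*} [DivisionRing R] (f : R[X]) (k : ℕ) : R :=
  f.coeff (k - 1) ^ 2 / (f.coeff (k - 2) * f.coeff k)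

-- `Cubic` lists coefficients from the leading one down: this is `1 + z + z²/s − z³/s³`.
noncomputable def scaledCubic (s : ℂ) : Cubic ℂ := ⟨-(s ^ 3)⁻¹, s⁻¹, 1, 1⟩

section scaledCubic

variable {s : ℂ}

theorem scaledCubic_a_ne_zero (hs : s ≠ 0) : (scaledCubic s).a ≠ 0 := by
  simpa [scaledCubic] using hs

theorem scaledCubic_coeff_ne_zero (hs : s ≠ 0) {k : ℕ} (hk : k ≤ 3) :
    (scaledCubic s).toPoly.coeff k ≠ 0 := by
  interval_cases k <;>
    simp [Cubic.coeff_eq_a, Cubic.coeff_eq_b, Cubic.coeff_eq_c, Cubic.coeff_eq_d, scaledCubic, hs]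

theorem secondQuotient_scaledCubic_two : secondQuotient (scaledCubic s).toPoly 2 = s := by
  simp [secondQuotient, Cubic.coeff_eq_b, Cubic.coeff_eq_c, Cubic.coeff_eq_d, scaledCubic]

theorem secondQuotient_scaledCubic_three (hs : s ≠ 0) :
    secondQuotient (scaledCubic s).toPoly 3 = -s := by
  simp only [secondQuotient, Nat.reduceSub, Cubic.coeff_eq_a, Cubic.coeff_eq_b, Cubic.coeff_eq_c,
    scaledCubic]
  field_simp

theorem scaledCubic_discr (hs : s ≠ 0) :
    (scaledCubic s).discr = (s ^ 4 - 18 * s ^ 2 - 27) / s ^ 6 := by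
  simp only [Cubic.discr, scaledCubic]
  field_simp
  ring

end scaledCubic

theorem Q₀_eq_toPoly :
    Q₀ = (scaledCubic (Real.sqrt (9 + 6 * Real.sqrt 3) : ℂ)).toPoly := by
  simp only [Q₀, scaledCubic, Cubic.toPoly, map_one]
  ring

theorem sqrt_nine_add_six_sqrt_three_quartic_eq_zero :
    (√(9 + 6 * √3)) ^ 4 - 18 * (√(9 + 6 * √3)) ^ 2 - 27 = 0 := by
  have h3 : √3 ^ 2 = 3 := Real.sq_sqrt (by norm_num)
  have hs : √(9 + 6 * √3) ^ 2 = 9 + 6 * √3 := Real.sq_sqrt (by positivity)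
  linear_combination (√(9 + 6 * √3) ^ 2 + 6 * √3 - 9) * hs + 36 * h3

/-- There is a complex cubic with nonzero coefficients such that
`|q_2(Q)| = |q_3(Q)| = √(9+6√3)` and `Q` has a multiple root; in particular the
explicit polynomial `Q₀` above has these properties. -/
theorem stmt_11 :
    (Q₀.natDegree = 3 ∧
      (∀ k, k ≤ 3 → Q₀.coeff k ≠ 0) ∧
      ‖(Q₀.coeff 1) ^ 2 / (Q₀.coeff 0 * Q₀.coeff 2)‖ =
        Real.sqrt (9 + 6 * Real.sqrt 3) ∧
      ‖(Q₀.coeff 2) ^ 2 / (Q₀.coeff 1 * Q₀.coeff 3)‖ =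
        Real.sqrt (9 + 6 * Real.sqrt 3) ∧
      (∃ z : ℂ, 2 ≤ Q₀.rootMultiplicity z)) ∧
    (∃ Q : Polynomial ℂ, Q.natDegree = 3 ∧
      (∀ k, k ≤ 3 → Q.coeff k ≠ 0) ∧
      ‖(Q.coeff 1) ^ 2 / (Q.coeff 0 * Q.coeff 2)‖ =
        Real.sqrt (9 + 6 * Real.sqrt 3) ∧
      ‖(Q.coeff 2) ^ 2 / (Q.coeff 1 * Q.coeff 3)‖ =
        Real.sqrt (9 + 6 * Real.sqrt 3) ∧
      (∃ z : ℂ, 2 ≤ Q.rootMultiplicity z)) := by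
  have hs : 0 < √(9 + 6 * √3) := Real.sqrt_pos.mpr (by positivity)
  have hsC : (√(9 + 6 * √3) : ℂ) ≠ 0 := by exact_mod_cast hs.ne'
  have ha := scaledCubic_a_ne_zero hsC
  have hd : (scaledCubic (√(9 + 6 * √3) : ℂ)).discr = 0 := by
    rw [scaledCubic_discr hsC, div_eq_zero_iff]
    exact Or.inl (mod_cast sqrt_nine_add_six_sqrt_three_quartic_eq_zero)
  refine ⟨?h, Q₀, ?h⟩
  rw [Q₀_eq_toPoly]
  refine ⟨Cubic.natDegree_of_a_ne_zero ha, fun k ↦ scaledCubic_coeff_ne_zero hsC, ?_, ?_,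
    Cubic.exists_two_le_rootMultiplicity_of_discr_eq_zero ha hd⟩
  · change ‖secondQuotient _ 2‖ = _
    rw [secondQuotient_scaledCubic_two, Complex.norm_real, Real.norm_of_nonneg hs.le]
  · change ‖secondQuotient _ 3‖ = _
    rw [secondQuotient_scaledCubic_three hsC, norm_neg, Complex.norm_real,
      Real.norm_of_nonneg hs.le]
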